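/- arXiv:1703.06128 — 2 statements merged into one kernel-verified Lean document; each statement's English description precedes it below -/
import Mathlib

section
/- Let p₁, ..., p_{N-1} be probability densities on (Ω, μ), α₁, ..., α_{N-1} ≥ 0 with ∑ αₙ = 1, and let b = ∫_Ω ∏ₙ pₙ^{αₙ} dμ ∈ (0, ∞). Then for every probability density p_N on (Ω, μ), ∑_{n=1}^{N-1} αₙ D_KL(p_N ‖ pₙ) ≥ -log b. -/
/-! Pointwise, `∑ₙ αₙ q log (q / pₙ) = q log (q / g)` for the weighted geometric mean
`g = ∏ₙ pₙ ^ αₙ`, and `g / b` integrates to `1`. Gibbs' inequality `q - r ≤ q log (q / r)`,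
integrated against `r = g / b`, gives `0 ≤ ∫ q log (q / g) + log b`. -/

open MeasureTheory Real

namespace Real

lemma sub_le_mul_log_div {q r : ℝ} (hq : 0 ≤ q) (hr : 0 < r) : q - r ≤ q * log (q / r) := by
  have h := mul_nonneg hr.le (InformationTheory.klFun_nonneg (div_nonneg hq hr.le))
  rw [InformationTheory.klFun_apply] at h
  have hexpand : r * (q / r * log (q / r) + 1 - q / r) = q * log (q / r) + r - q := by
    field_simp
  linarith

lemma mul_log_div_div (q : ℝ) {r c : ℝ} (hr : r ≠ 0) (hc : c ≠ 0) :
    q * log (q / (r / c)) = q * log (q / r) + q * log c := by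
  rcases eq_or_ne q 0 with rfl | hq
  · simp
  · rw [div_div_eq_mul_div, mul_div_right_comm, log_mul (div_ne_zero hq hr) hc, mul_add]

lemma mul_log_div_prod_rpow {ι : Type*} (s : Finset ι) (q : ℝ) {x w : ι → ℝ}
    (hx : ∀ i ∈ s, 0 < x i) (hw : ∑ i ∈ s, w i = 1) :
    q * log (q / ∏ i ∈ s, x i ^ w i) = ∑ i ∈ s, w i * (q * log (q / x i)) := by
  rcases eq_or_ne q 0 with rfl | hq
  · simp
  have hlog_prod : log (∏ i ∈ s, x i ^ w i) = ∑ i ∈ s, w i * log (x i) := by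
    rw [log_prod fun i hi => (rpow_pos_of_pos (hx i hi) _).ne']
    exact Finset.sum_congr rfl fun i hi => log_rpow (hx i hi) _
  have hprod_ne : ∏ i ∈ s, x i ^ w i ≠ 0 :=
    Finset.prod_ne_zero_iff.2 fun i hi => (rpow_pos_of_pos (hx i hi) _).ne'
  calc q * log (q / ∏ i ∈ s, x i ^ w i)
      = (∑ i ∈ s, w i) * (q * log q) - q * ∑ i ∈ s, w i * log (x i) := by
        rw [log_div hq hprod_ne, hlog_prod, hw]; ring
    _ = ∑ i ∈ s, w i * (q * log (q / x i)) := by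
        rw [Finset.sum_mul, Finset.mul_sum, ← Finset.sum_sub_distrib]
        exact Finset.sum_congr rfl fun i hi => by rw [log_div hq (hx i hi).ne']; ring

end Real

lemma integral_sub_le_integral_mul_log_div {α : Type*} [MeasurableSpace α] {μ : Measure α}
    {q r : α → ℝ} (hq : Integrable q μ) (hr : Integrable r μ)
    (hqr : Integrable (fun x => q x * log (q x / r x)) μ)
    (hq_nonneg : ∀ᵐ x ∂μ, 0 ≤ q x) (hr_pos : ∀ᵐ x ∂μ, 0 < r x) :
    ∫ x, q x ∂μ - ∫ x, r x ∂μ ≤ ∫ x, q x * log (q x / r x) ∂μ := by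
  rw [← integral_sub hq hr]
  refine integral_mono_ae (hq.sub hr) hqr ?_
  filter_upwards [hq_nonneg, hr_pos] with x hqx hrx using sub_le_mul_log_div hqx hrx

theorem weighted_kl_lower_bound_general
    {Ω : Type*} [MeasurableSpace Ω] (μ : Measure Ω) (m : ℕ)
    (p : Fin m → Ω → ℝ) (α : Fin m → ℝ)
    (hαsum : ∑ n, α n = 1)
    (hppos : ∀ n, ∀ ω, 0 < p n ω)
    (hgint : Integrable (fun ω => ∏ n, (p n ω) ^ (α n)) μ)
    (b : ℝ) (hb : b = ∫ ω, ∏ n, (p n ω) ^ (α n) ∂μ) (hbpos : 0 < b)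
    (pN : Ω → ℝ) (hNnonneg : ∀ ω, 0 ≤ pN ω)
    (hNint : ∫ ω, pN ω ∂μ = 1)
    (hint : ∀ n, Integrable (fun ω => pN ω * Real.log (pN ω / p n ω)) μ) :
    -Real.log b ≤ ∑ n, α n * ∫ ω, pN ω * Real.log (pN ω / p n ω) ∂μ := by
  set g : Ω → ℝ := fun ω => ∏ n, (p n ω) ^ (α n)
  have hgpos : ∀ ω, 0 < g ω := fun ω =>
    Finset.prod_pos fun n _ => rpow_pos_of_pos (hppos n ω) _
  have hsplit : ∀ ω, pN ω * log (pN ω / (g ω / b))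
      = ∑ n, α n * (pN ω * log (pN ω / p n ω)) + pN ω * log b := fun ω => by
    rw [mul_log_div_div _ (hgpos ω).ne' hbpos.ne',
      mul_log_div_prod_rpow _ _ (fun n _ => hppos n ω) hαsum]
  have hsum_int : Integrable (fun ω => ∑ n, α n * (pN ω * log (pN ω / p n ω))) μ :=
    integrable_finsetSum _ fun n _ => (hint n).const_mul _
  have hpN_int : Integrable pN μ := .of_integral_ne_zero (by rw [hNint]; exact one_ne_zero)
  have hgibbs := integral_sub_le_integral_mul_log_div hpN_int (hgint.div_const b)
    (by simp only [hsplit]; exact hsum_int.add (hpN_int.mul_const (log b)))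
    (.of_forall hNnonneg) (.of_forall fun ω => div_pos (hgpos ω) hbpos)
  simp only [hsplit] at hgibbs
  rw [integral_add hsum_int (hpN_int.mul_const _), integral_finsetSum _
    fun n _ => (hint n).const_mul _, integral_mul_const, integral_div, ← hb, hNint,
    div_self hbpos.ne'] at hgibbs
  simp only [integral_const_mul] at hgibbs
  linarith

theorem weighted_kl_lower_bound
    {Ω : Type*} [MeasurableSpace Ω] (μ : Measure Ω) (m : ℕ)
    (p : Fin m → Ω → ℝ) (α : Fin m → ℝ)
    (hα : ∀ n, 0 ≤ α n) (hαsum : ∑ n, α n = 1)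
    (hpmeas : ∀ n, Measurable (p n)) (hppos : ∀ n, ∀ ω, 0 < p n ω)
    (hpint : ∀ n, ∫ ω, p n ω ∂μ = 1)
    (hgint : Integrable (fun ω => ∏ n, (p n ω) ^ (α n)) μ)
    (b : ℝ) (hb : b = ∫ ω, ∏ n, (p n ω) ^ (α n) ∂μ) (hbpos : 0 < b)
    (pN : Ω → ℝ) (hNmeas : Measurable pN) (hNnonneg : ∀ ω, 0 ≤ pN ω)
    (hNint : ∫ ω, pN ω ∂μ = 1)
    (hint : ∀ n, Integrable (fun ω => pN ω * Real.log (pN ω / p n ω)) μ) :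
    -Real.log b ≤ ∑ n, α n * ∫ ω, pN ω * Real.log (pN ω / p n ω) ∂μ :=
  weighted_kl_lower_bound_general μ m p α hαsum hppos hgint b hb hbpos pN hNnonneg hNint hint
end

section
/- (Discrete optimality gap, single density.) Let g : ℝ → ℝ be convex and differentiable, μ ∈ ℝ^K with μ_k > 0, and let q minimize F(a) = ∑_k g(a_k) μ_k subject to p' ≤ a ≤ p'' and ⟨a, μ⟩ = 1. Then for every feasible a and every c ∈ ℝ: F(a) - F(q) ≤ e'' + e', where e'' = ∑_k (a_k - p''_k) · min{g'(a_k) - c, 0} · μ_k ≥ 0 and e' = ∑_k (a_k - p'_k) · max{g'(a_k) - c, 0} · μ_k ≥ 0. -/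
/-!
By the tangent-line inequality of the convex function `g` at `a k`, for any feasible `b`,
`g (a k) - g (b k) ≤ (g' (a k) - c) (a k - b k) + c (a k - b k)`.
After weighting by `μ` the `c`-terms cancel because `⟨a, μ⟩ = ⟨b, μ⟩`. Splitting
`g' (a k) - c` into its negative and positive parts, the box constraint `b k ≤ p'' k` bounds
the first and `p' k ≤ b k` the second: this is Lagrange duality with the multipliers chosen
to make `a` stationary.
-/

open Finset Set

theorem ConvexOn.deriv_mul_sub_le {S : Set ℝ} {f : ℝ → ℝ} (hf : ConvexOn ℝ S f) {x y : ℝ}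
    (hx : x ∈ S) (hy : y ∈ S) (hfx : DifferentiableAt ℝ f x) :
    deriv f x * (y - x) ≤ f y - f x := by
  rcases lt_trichotomy x y with hxy | rfl | hyx
  · have hslope := hf.deriv_le_slope hx hy hxy hfx
    rwa [slope_def_field, le_div_iff₀ (sub_pos.2 hxy)] at hslope
  · simp
  · have hslope := hf.slope_le_deriv hy hx hyx hfx
    rw [slope_def_field, div_le_iff₀ (sub_pos.2 hyx)] at hslope
    linarith

theorem mul_sub_le_of_mem_Icc {lo hi y : ℝ} (hy : y ∈ Icc lo hi) (d x : ℝ) :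
    d * (x - y) ≤ (x - hi) * min d 0 + (x - lo) * max d 0 := by
  have hneg : min d 0 * (x - y) ≤ min d 0 * (x - hi) :=
    mul_le_mul_of_nonpos_left (by linarith [hy.2]) (min_le_right d 0)
  have hpos : max d 0 * (x - y) ≤ max d 0 * (x - lo) :=
    mul_le_mul_of_nonneg_left (by linarith [hy.1]) (le_max_right d 0)
  have hsplit : d = min d 0 + max d 0 := by rw [min_add_max, add_zero]
  calc d * (x - y) = min d 0 * (x - y) + max d 0 * (x - y) := by rw [← add_mul, ← hsplit]
    _ ≤ (x - hi) * min d 0 + (x - lo) * max d 0 := by linarith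

theorem ConvexOn.sub_le_of_mem_Icc {g : ℝ → ℝ} (hg : ConvexOn ℝ univ g)
    (hgd : Differentiable ℝ g) {lo hi y : ℝ} (hy : y ∈ Icc lo hi) (x c : ℝ) :
    g x - g y ≤ (x - hi) * min (deriv g x - c) 0 + (x - lo) * max (deriv g x - c) 0
      + c * (x - y) := by
  have htangent := hg.deriv_mul_sub_le (mem_univ x) (mem_univ y) (hgd x)
  have hbox := mul_sub_le_of_mem_Icc hy (deriv g x - c) x
  linarith

theorem ConvexOn.weighted_sum_sub_le {ι : Type*} [Fintype ι] {g : ℝ → ℝ}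
    (hg : ConvexOn ℝ univ g) (hgd : Differentiable ℝ g) {μ lo hi a b : ι → ℝ}
    (hμ : ∀ k, 0 ≤ μ k) (hb : ∀ k, b k ∈ Icc (lo k) (hi k))
    (hab : ∑ k, a k * μ k = ∑ k, b k * μ k) (c : ℝ) :
    (∑ k, g (a k) * μ k) - (∑ k, g (b k) * μ k) ≤
      (∑ k, (a k - hi k) * min (deriv g (a k) - c) 0 * μ k) +
        (∑ k, (a k - lo k) * max (deriv g (a k) - c) 0 * μ k) := by
  have hterm : ∀ k, (g (a k) - g (b k)) * μ k ≤
      (a k - hi k) * min (deriv g (a k) - c) 0 * μ k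
        + (a k - lo k) * max (deriv g (a k) - c) 0 * μ k + c * (a k * μ k - b k * μ k) := by
    intro k
    have := mul_le_mul_of_nonneg_right (hg.sub_le_of_mem_Icc hgd (hb k) (a k) c) (hμ k)
    linarith
  calc (∑ k, g (a k) * μ k) - (∑ k, g (b k) * μ k) = ∑ k, (g (a k) - g (b k)) * μ k := by
        simp only [sub_mul, sum_sub_distrib]
    _ ≤ _ := sum_le_sum fun k _ => hterm k
    _ = (∑ k, (a k - hi k) * min (deriv g (a k) - c) 0 * μ k) +
          (∑ k, (a k - lo k) * max (deriv g (a k) - c) 0 * μ k) +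
          c * ((∑ k, a k * μ k) - ∑ k, b k * μ k) := by
        rw [sum_add_distrib, sum_add_distrib, ← sum_sub_distrib, mul_sum]
    _ = _ := by rw [hab, sub_self, mul_zero, add_zero]

theorem discrete_optimality_gap_general
    (K : ℕ) (μ p' p'' : Fin K → ℝ)
    (hμ : ∀ k, 0 < μ k)
    (g : ℝ → ℝ) (hgconv : ConvexOn ℝ Set.univ g) (hgdiff : Differentiable ℝ g)
    (q : Fin K → ℝ)
    (hqfeas : (∀ k, p' k ≤ q k ∧ q k ≤ p'' k) ∧ ∑ k, q k * μ k = 1)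
    (a : Fin K → ℝ)
    (hafeas : (∀ k, p' k ≤ a k ∧ a k ≤ p'' k) ∧ ∑ k, a k * μ k = 1)
    (c : ℝ) :
    (∑ k, g (a k) * μ k) - (∑ k, g (q k) * μ k) ≤
        (∑ k, (a k - p'' k) * min (deriv g (a k) - c) 0 * μ k) +
        (∑ k, (a k - p' k) * max (deriv g (a k) - c) 0 * μ k) ∧
      0 ≤ ∑ k, (a k - p'' k) * min (deriv g (a k) - c) 0 * μ k ∧
      0 ≤ ∑ k, (a k - p' k) * max (deriv g (a k) - c) 0 * μ k := by
  obtain ⟨ha, hasum⟩ := hafeas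
  obtain ⟨hq, hqsum⟩ := hqfeas
  refine ⟨hgconv.weighted_sum_sub_le hgdiff (fun k => (hμ k).le) hq (hasum.trans hqsum.symm) c,
    sum_nonneg fun k _ => mul_nonneg ?_ (hμ k).le, sum_nonneg fun k _ => mul_nonneg ?_ (hμ k).le⟩
  · exact mul_nonneg_of_nonpos_of_nonpos (sub_nonpos.2 (ha k).2) (min_le_right _ _)
  · exact mul_nonneg (sub_nonneg.2 (ha k).1) (le_max_right _ _)

theorem discrete_optimality_gap
    (K : ℕ) (μ p' p'' : Fin K → ℝ)
    (hμ : ∀ k, 0 < μ k)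
    (g : ℝ → ℝ) (hgconv : ConvexOn ℝ Set.univ g) (hgdiff : Differentiable ℝ g)
    (q : Fin K → ℝ)
    (hqfeas : (∀ k, p' k ≤ q k ∧ q k ≤ p'' k) ∧ ∑ k, q k * μ k = 1)
    (hqmin : ∀ b : Fin K → ℝ, ((∀ k, p' k ≤ b k ∧ b k ≤ p'' k) ∧ ∑ k, b k * μ k = 1) →
        ∑ k, g (q k) * μ k ≤ ∑ k, g (b k) * μ k)
    (a : Fin K → ℝ)
    (hafeas : (∀ k, p' k ≤ a k ∧ a k ≤ p'' k) ∧ ∑ k, a k * μ k = 1)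
    (c : ℝ) :
    (∑ k, g (a k) * μ k) - (∑ k, g (q k) * μ k) ≤
        (∑ k, (a k - p'' k) * min (deriv g (a k) - c) 0 * μ k) +
        (∑ k, (a k - p' k) * max (deriv g (a k) - c) 0 * μ k) ∧
      0 ≤ ∑ k, (a k - p'' k) * min (deriv g (a k) - c) 0 * μ k ∧
      0 ≤ ∑ k, (a k - p' k) * max (deriv g (a k) - c) 0 * μ k :=
  discrete_optimality_gap_general K μ p' p'' hμ g hgconv hgdiff q hqfeas a hafeas c
end
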